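/- arXiv:2505.08829 — 4 statements merged into one kernel-verified Lean document; each statement's English description precedes it below -/
import Mathlib

section
/- Let Ω be a measurable space, let n be a natural number, and let u₁, …, uₙ : Ω → ℝ be measurable functions. Suppose z : Ω → ℝ is a measurable function with the following property (the ex ante Pareto indifference property D): for all probability measures μ and ν on Ω such that z and each uᵢ are integrable with respect to both μ and ν, if ∫ uᵢ dμ = ∫ uᵢ dν for every i = 1, …, n, then ∫ z dμ = ∫ z dν. Then there exist real numbers α, w₁, …, wₙ such that z(x) = α + ∑ᵢ wᵢ · uᵢ(x) for every x ∈ Ω. -/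
open MeasureTheory

lemma integrable_dirac'' {Ω : Type*} [MeasurableSpace Ω] {g : Ω → ℝ}
    (hg : Measurable g) (a : Ω) : Integrable g (Measure.dirac a) := by
  refine ⟨hg.aestronglyMeasurable, ?_⟩
  rw [HasFiniteIntegral, lintegral_dirac' _ hg.enorm]
  exact ENNReal.coe_lt_top

lemma discrete_measure_facts {Ω : Type*} [MeasurableSpace Ω] {m : ℕ}
    (x : Fin m → Ω) (p : Fin m → ℝ) (hp : ∀ j, 0 ≤ p j) (hsum : ∑ j, p j = 1) :
    IsProbabilityMeasure (∑ j, (ENNReal.ofReal (p j)) • Measure.dirac (x j)) ∧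
    (∀ g : Ω → ℝ, Measurable g →
      Integrable g (∑ j, (ENNReal.ofReal (p j)) • Measure.dirac (x j))) ∧
    (∀ g : Ω → ℝ, Measurable g →
      ∫ a, g a ∂(∑ j, (ENNReal.ofReal (p j)) • Measure.dirac (x j))
        = ∑ j, p j * g (x j)) := by
  set μ : Measure Ω := ∑ j, (ENNReal.ofReal (p j)) • Measure.dirac (x j) with hμ
  have hint : ∀ g : Ω → ℝ, Measurable g → Integrable g μ := by
    intro g hg
    rw [hμ, integrable_finset_sum_measure]
    intro j _
    exact (integrable_dirac'' hg (x j)).smul_measure ENNReal.ofReal_ne_top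
  refine ⟨?_, hint, ?_⟩
  · constructor
    rw [hμ, Measure.finset_sum_apply]
    simp only [Measure.smul_apply, MeasureTheory.Measure.dirac_apply_of_mem (Set.mem_univ _),
      smul_eq_mul, mul_one]
    rw [← ENNReal.ofReal_sum_of_nonneg (fun j _ => hp j), hsum, ENNReal.ofReal_one]
  · intro g hg
    rw [hμ, integral_finset_sum_measure (fun j _ =>
      (integrable_dirac'' hg (x j)).smul_measure ENNReal.ofReal_ne_top)]
    refine Finset.sum_congr rfl fun j _ => ?_
    rw [integral_smul_measure, integral_dirac' _ _ hg.stronglyMeasurable,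
      ENNReal.toReal_ofReal (hp j), smul_eq_mul]

lemma factor_through {K V W : Type*} [Field K] [AddCommGroup V] [Module K V]
    [AddCommGroup W] [Module K W] (T : Submodule K V)
    (π : V →ₗ[K] W) (lam : V →ₗ[K] K)
    (h : ∀ t ∈ T, π t = 0 → lam t = 0) :
    ∃ L : W →ₗ[K] K, ∀ t ∈ T, L (π t) = lam t := by
  set q : T →ₗ[K] W := π.comp T.subtype with hq
  set ℓ : T →ₗ[K] K := lam.comp T.subtype with hℓ
  have hker : LinearMap.ker q ≤ LinearMap.ker ℓ := by
    intro t ht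
    simp only [LinearMap.mem_ker, hq, LinearMap.comp_apply] at ht ⊢
    exact h t t.2 ht
  set lift : (T ⧸ LinearMap.ker q) →ₗ[K] K := (LinearMap.ker q).liftQ ℓ hker with hlift
  set g : LinearMap.range q →ₗ[K] K :=
    lift.comp (q.quotKerEquivRange.symm : LinearMap.range q ≃ₗ[K] T ⧸ LinearMap.ker q).toLinearMap
    with hg
  obtain ⟨L, hL⟩ := g.exists_extend
  refine ⟨L, fun t ht => ?_⟩
  have h1 : π t = (LinearMap.range q).subtype ⟨q ⟨t, ht⟩, LinearMap.mem_range_self q _⟩ := rfl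
  rw [h1, ← LinearMap.comp_apply, hL]
  have h2 : q.quotKerEquivRange.symm ⟨q ⟨t, ht⟩, LinearMap.mem_range_self q _⟩
      = Submodule.Quotient.mk (⟨t, ht⟩ : T) := by
    rw [LinearEquiv.symm_apply_eq]
    exact Subtype.ext (q.quotKerEquivRange_apply_mk ⟨t, ht⟩).symm
  simp only [hg, LinearMap.comp_apply, LinearEquiv.coe_coe, h2, hlift,
    Submodule.liftQ_apply, hℓ, LinearMap.comp_apply, Submodule.coe_subtype]

/-- Harsanyi's aggregation theorem (Proposition 1): if a measurable function `z`
satisfies the ex ante Pareto indifference property D with respect to measurable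
utility functions `u 0, …, u (n-1)`, then `z` is an affine combination of them. -/
theorem harsanyi_aggregation
    {Ω : Type*} [MeasurableSpace Ω] (n : ℕ)
    (u : Fin n → Ω → ℝ) (hu : ∀ i, Measurable (u i))
    (z : Ω → ℝ) (hz : Measurable z)
    (hD : ∀ (μ ν : Measure Ω), IsProbabilityMeasure μ → IsProbabilityMeasure ν →
      Integrable z μ → Integrable z ν →
      (∀ i, Integrable (u i) μ) → (∀ i, Integrable (u i) ν) →
      (∀ i, ∫ x, u i x ∂μ = ∫ x, u i x ∂ν) →
      ∫ x, z x ∂μ = ∫ x, z x ∂ν) :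
    ∃ (α : ℝ) (w : Fin n → ℝ), ∀ x : Ω, z x = α + ∑ i, w i * u i x := by
  classical
  set v : Fin (n+1) → Ω → ℝ := Fin.cons (fun _ => 1) u with hv
  set f : Ω → (Fin (n+2) → ℝ) := fun x => Fin.snoc (fun i => v i x) (z x) with hf
  set T : Submodule ℝ (Fin (n+2) → ℝ) := Submodule.span ℝ (Set.range f) with hT
  by_cases hA : ∃ t ∈ T, (∀ i : Fin (n+1), t i.castSucc = 0) ∧ t (Fin.last (n+1)) ≠ 0
  · -- Case A: contradiction with Pareto property via discrete measures
    exfalso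
    obtain ⟨t, htT, hzero, hlast⟩ := hA
    rw [hT, Submodule.mem_span_set'] at htT
    obtain ⟨m, c, gsel, hrep⟩ := htT
    choose x hx using fun j => (gsel j).2
    simp_rw [← hx] at hrep
    have hcoord : ∀ k, ∑ j, c j * f (x j) k = t k := by
      intro k
      rw [← hrep]
      simp [Finset.sum_apply]
    have hfc : ∀ j (i : Fin (n+1)), f (x j) i.castSucc = v i (x j) := by
      intro j i; simp [hf, Fin.snoc_castSucc]
    have hfl : ∀ j, f (x j) (Fin.last (n+1)) = z (x j) := by
      intro j; simp [hf]
    have hsum0 : ∑ j, c j = 0 := by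
      have := hcoord (Fin.castSucc 0)
      rw [hzero 0] at this
      simp only [hfc] at this
      simpa [hv] using this
    have hui : ∀ i : Fin n, ∑ j, c j * u i (x j) = 0 := by
      intro i
      have := hcoord (Fin.castSucc i.succ)
      rw [hzero i.succ] at this
      simp only [hfc] at this
      simpa [hv] using this
    have hzt : ∑ j, c j * z (x j) = t (Fin.last (n+1)) := by
      have := hcoord (Fin.last (n+1))
      simpa [hfl] using this
    set p : Fin m → ℝ := fun j => max (c j) 0 with hp
    set q : Fin m → ℝ := fun j => max (-(c j)) 0 with hq
    have hpq : ∀ j, p j - q j = c j := by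
      intro j
      rcases le_total (c j) 0 with h | h
      · simp [hp, hq, max_eq_right h, max_eq_left (neg_nonneg.mpr h)]
      · simp [hp, hq, max_eq_left h, max_eq_right (neg_nonpos.mpr h)]
    have hpn : ∀ j, 0 ≤ p j := fun j => le_max_right _ _
    have hqn : ∀ j, 0 ≤ q j := fun j => le_max_right _ _
    set M : ℝ := ∑ j, p j with hM
    have hMq : ∑ j, q j = M := by
      have : ∑ j, (p j - q j) = 0 := by simp_rw [hpq]; exact hsum0
      rw [Finset.sum_sub_distrib] at this
      linarith
    have hMnn : 0 ≤ M := Finset.sum_nonneg fun j _ => hpn j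
    have hMpos : 0 < M := by
      rcases hMnn.lt_or_eq with h | h
      · exact h
      · exfalso
        have hp0 : ∀ j ∈ Finset.univ, p j = 0 :=
          (Finset.sum_eq_zero_iff_of_nonneg fun j _ => hpn j).mp h.symm
        have hq0 : ∀ j ∈ Finset.univ, q j = 0 := by
          refine (Finset.sum_eq_zero_iff_of_nonneg fun j _ => hqn j).mp ?_
          rw [hMq]; exact h.symm
        have hc0 : ∀ j, c j = 0 := by
          intro j
          rw [← hpq j, hp0 j (Finset.mem_univ j), hq0 j (Finset.mem_univ j), sub_zero]
        apply hlast
        rw [← hzt]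
        simp [hc0]
    obtain ⟨hμP, hμI, hμint⟩ := discrete_measure_facts x (fun j => p j / M)
      (fun j => div_nonneg (hpn j) hMnn)
      (by rw [← Finset.sum_div, ← hM, div_self hMpos.ne'])
    obtain ⟨hνP, hνI, hνint⟩ := discrete_measure_facts x (fun j => q j / M)
      (fun j => div_nonneg (hqn j) hMnn)
      (by rw [← Finset.sum_div, hMq, div_self hMpos.ne'])
    have key : ∀ g : Ω → ℝ, (∑ j, (p j / M) * g (x j)) - (∑ j, (q j / M) * g (x j))
        = (∑ j, c j * g (x j)) / M := by
      intro g
      rw [← Finset.sum_sub_distrib, Finset.sum_div]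
      refine Finset.sum_congr rfl fun j _ => ?_
      rw [div_mul_eq_mul_div, div_mul_eq_mul_div, ← sub_div, ← sub_mul, hpq j]
    have hDeq := hD _ _ hμP hνP (hμI z hz) (hνI z hz) (fun i => hμI (u i) (hu i))
      (fun i => hνI (u i) (hu i)) ?_
    · rw [hμint z hz, hνint z hz] at hDeq
      have : (∑ j, c j * z (x j)) / M = 0 := by
        rw [← key z, hDeq, sub_self]
      rw [hzt] at this
      exact hlast ((div_eq_zero_iff.mp this).resolve_right hMpos.ne')
    · intro i
      rw [hμint (u i) (hu i), hνint (u i) (hu i), ← sub_eq_zero, key (u i), hui i, zero_div]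
  · -- Case B: z is an affine combination
    push_neg at hA
    obtain ⟨L, hL⟩ := factor_through T (LinearMap.funLeft ℝ ℝ (Fin.castSucc : Fin (n+1) → Fin (n+2)))
      (LinearMap.proj (Fin.last (n+1))) (by
        intro t ht hπ
        refine hA t ht ?_
        intro i
        have := congrFun hπ i
        simpa [LinearMap.funLeft_apply] using this)
    refine ⟨L (Pi.single 0 1), fun i => L (Pi.single i.succ 1), fun x => ?_⟩
    have hxT : f x ∈ T := Submodule.subset_span (Set.mem_range_self x)
    have h1 := hL (f x) hxT
    have hπfx : (LinearMap.funLeft ℝ ℝ (Fin.castSucc : Fin (n+1) → Fin (n+2))) (f x)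
        = fun i => v i x := by
      funext i
      simp [LinearMap.funLeft_apply, hf, Fin.snoc_castSucc]
    have hlam : (LinearMap.proj (Fin.last (n+1)) : (Fin (n+2) → ℝ) →ₗ[ℝ] ℝ) (f x) = z x := by
      simp [hf]
    rw [hπfx, hlam] at h1
    have hsingle : (fun i => v i x) = ∑ k, (v k x) • (Pi.single k (1:ℝ) : Fin (n+1) → ℝ) := by
      funext i
      rw [Finset.sum_apply]
      simp [Pi.single_apply]
    rw [hsingle, map_sum] at h1
    simp_rw [LinearMap.map_smul, smul_eq_mul] at h1
    rw [← h1, Fin.sum_univ_succ]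
    simp only [hv, Fin.cons_zero, Fin.cons_succ, one_mul, mul_one]
    congr 1
    exact Finset.sum_congr rfl fun i _ => mul_comm _ _
end

section
/- Let Ω be any type, let n be a natural number, and let u₁, …, uₙ, z : Ω → ℝ be functions. Suppose that for all finitely supported functions p, q : Ω → ℝ with nonnegative values and ∑ₓ p(x) = ∑ₓ q(x) = 1 (finitely supported probability weight functions), the implication holds: if ∑ₓ p(x)·uᵢ(x) = ∑ₓ q(x)·uᵢ(x) for every i = 1, …, n, then ∑ₓ p(x)·z(x) = ∑ₓ q(x)·z(x). Then z lies in the linear span of the constant function 1 together with u₁, …, uₙ; that is, there exist real numbers α, w₁, …, wₙ with z(x) = α + ∑ᵢ wᵢ · uᵢ(x) for all x ∈ Ω. -/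
/-- Measure-free version of Proposition 1: if `z` satisfies the ex ante Pareto
indifference property with respect to all finitely supported probability weight
functions, then `z` is an affine combination of `u 0, …, u (n-1)`. -/
theorem harsanyi_aggregation_finsupp
    {Ω : Type*} (n : ℕ) (u : Fin n → Ω → ℝ) (z : Ω → ℝ)
    (hD : ∀ p q : Ω →₀ ℝ, (∀ x, 0 ≤ p x) → (∀ x, 0 ≤ q x) →
      (p.sum fun _ a => a) = 1 → (q.sum fun _ a => a) = 1 →
      (∀ i, (p.sum fun x a => a * u i x) = (q.sum fun x a => a * u i x)) →
      (p.sum fun x a => a * z x) = (q.sum fun x a => a * z x)) :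
    ∃ (α : ℝ) (w : Fin n → ℝ), ∀ x : Ω, z x = α + ∑ i, w i * u i x := by
  classical
  -- Key lemma: signed combinations summing to zero with zero u-expectations
  -- give zero z-expectation.
  have key : ∀ c : Ω →₀ ℝ, (c.sum fun _ a => a) = 0 →
      (∀ i, (c.sum fun x a => a * u i x) = 0) → (c.sum fun x a => a * z x) = 0 := by
    intro c hc0 hcu
    set pos : Ω →₀ ℝ := c.filter (fun x => 0 ≤ c x) with hposdef
    set neg : Ω →₀ ℝ := pos - c with hnegdef
    have hposx : ∀ x, pos x = if 0 ≤ c x then c x else 0 := by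
      intro x; simp [hposdef, Finsupp.filter_apply]
    have hpos : ∀ x, 0 ≤ pos x := by
      intro x; rw [hposx]; split <;> simp_all
    have hneg : ∀ x, 0 ≤ neg x := by
      intro x
      have : neg x = pos x - c x := by simp [hnegdef]
      rw [this, hposx]; split <;> simp_all; linarith
    have hsub : ∀ f : Ω → ℝ,
        (neg.sum fun x a => a * f x)
          = (pos.sum fun x a => a * f x) - (c.sum fun x a => a * f x) := by
      intro f
      rw [hnegdef, Finsupp.sum_sub_index (fun x b₁ b₂ => by ring)]
    have hsub1 : (neg.sum fun _ a => a)
        = (pos.sum fun _ a => a) - (c.sum fun _ a => a) := by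
      rw [hnegdef, Finsupp.sum_sub_index (fun x b₁ b₂ => rfl)]
    set s : ℝ := pos.sum fun _ a => a with hsdef
    have hs0 : 0 ≤ s := Finset.sum_nonneg fun x _ => hpos x
    have hnegsum : (neg.sum fun _ a => a) = s := by rw [hsub1, hc0, sub_zero]
    by_cases hs : s = 0
    · have hposz : pos = 0 := by
        have h := (Finset.sum_eq_zero_iff_of_nonneg fun x _ => hpos x).1 hs
        ext x
        by_cases hx : x ∈ pos.support
        · exact h x hx
        · exact Finsupp.notMem_support_iff.1 hx
      have hnegz : neg = 0 := by
        have hz : (neg.sum fun _ a => a) = 0 := by rw [hnegsum, hs]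
        have h := (Finset.sum_eq_zero_iff_of_nonneg fun x _ => hneg x).1 hz
        ext x
        by_cases hx : x ∈ neg.support
        · exact h x hx
        · exact Finsupp.notMem_support_iff.1 hx
      have hcz : c = 0 := by
        have : c = pos - neg := by rw [hnegdef]; abel
        rw [this, hposz, hnegz, sub_zero]
      rw [hcz, Finsupp.sum_zero_index]
    · have hsmul : ∀ (d : Ω →₀ ℝ) (f : Ω → ℝ),
          ((s⁻¹ • d).sum fun x a => a * f x) = s⁻¹ * d.sum fun x a => a * f x := by
        intro d f
        rw [Finsupp.sum_smul_index (fun x => by ring), Finsupp.mul_sum]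
        exact Finsupp.sum_congr fun x _ => mul_assoc _ _ _
      have hsmul1 : ∀ d : Ω →₀ ℝ,
          ((s⁻¹ • d).sum fun _ a => a) = s⁻¹ * d.sum fun _ a => a := by
        intro d
        rw [Finsupp.sum_smul_index (fun x => rfl), Finsupp.mul_sum]
      have hnn : ∀ d : Ω →₀ ℝ, (∀ x, 0 ≤ d x) → ∀ x, 0 ≤ (s⁻¹ • d) x := by
        intro d hd x
        rw [Finsupp.smul_apply, smul_eq_mul]
        exact mul_nonneg (inv_nonneg.2 hs0) (hd x)
      have hp1 : ((s⁻¹ • pos).sum fun _ a => a) = 1 := by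
        rw [hsmul1, ← hsdef, inv_mul_cancel₀ hs]
      have hq1 : ((s⁻¹ • neg).sum fun _ a => a) = 1 := by
        rw [hsmul1, hnegsum, inv_mul_cancel₀ hs]
      have hu : ∀ i, ((s⁻¹ • pos).sum fun x a => a * u i x)
          = ((s⁻¹ • neg).sum fun x a => a * u i x) := by
        intro i
        rw [hsmul, hsmul, hsub (u i), hcu i, sub_zero]
      have main := hD _ _ (hnn pos hpos) (hnn neg hneg) hp1 hq1 hu
      rw [hsmul, hsmul] at main
      have hz : (pos.sum fun x a => a * z x) = (neg.sum fun x a => a * z x) :=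
        mul_left_cancel₀ (inv_ne_zero hs) main
      have := hsub z
      linarith
  -- Linear algebra: factor z through a linear functional on ℝ × (Fin n → ℝ)
  set f : Ω → ℝ × (Fin n → ℝ) := fun x => (1, fun i => u i x) with hfdef
  set T : (Ω →₀ ℝ) →ₗ[ℝ] ℝ × (Fin n → ℝ) := Finsupp.linearCombination ℝ f with hTdef
  set Z : (Ω →₀ ℝ) →ₗ[ℝ] ℝ := Finsupp.linearCombination ℝ z with hZdef
  have hker : LinearMap.ker T ≤ LinearMap.ker Z := by
    intro c hc
    have hc' : (c.sum fun x a => a • f x) = 0 := by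
      rw [LinearMap.mem_ker, hTdef, Finsupp.linearCombination_apply] at hc
      exact hc
    have h1 : (c.sum fun _ a => a) = 0 := by
      have h := congrArg (fun v : ℝ × (Fin n → ℝ) => v.1) hc'
      simp only [Finsupp.sum, Prod.fst_sum] at h
      simpa [hfdef, Finsupp.sum] using h
    have h2 : ∀ i, (c.sum fun x a => a * u i x) = 0 := by
      intro i
      have h := congrArg (fun v : ℝ × (Fin n → ℝ) => v.2 i) hc'
      simp only [Finsupp.sum, Prod.snd_sum, Finset.sum_apply] at h
      simpa [hfdef, Finsupp.sum] using h
    rw [LinearMap.mem_ker, hZdef, Finsupp.linearCombination_apply]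
    exact key c h1 h2
  obtain ⟨L, hL⟩ := LinearMap.exists_extend
    (((LinearMap.ker T).liftQ Z hker).comp T.quotKerEquivRange.symm.toLinearMap)
  have hLT : ∀ c : Ω →₀ ℝ, L (T c) = Z c := by
    intro c
    have h1 : T c = (LinearMap.range T).subtype ⟨T c, LinearMap.mem_range_self T c⟩ := rfl
    rw [h1, ← LinearMap.comp_apply, hL]
    have h2 : T.quotKerEquivRange (Submodule.Quotient.mk c)
        = (⟨T c, LinearMap.mem_range_self T c⟩ : LinearMap.range T) :=
      Subtype.ext (T.quotKerEquivRange_apply_mk c)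
    rw [← h2]
    simp [Submodule.liftQ_apply]
  refine ⟨L (1, 0), fun i => L ((0, Pi.single i 1) : ℝ × (Fin n → ℝ)), fun x => ?_⟩
  have hz : L (f x) = z x := by
    have := hLT (Finsupp.single x 1)
    rwa [hTdef, hZdef, Finsupp.linearCombination_single, Finsupp.linearCombination_single,
      one_smul, one_smul] at this
  have hdecomp : f x = (1, 0) + ∑ i, (u i x) • ((0, Pi.single i 1) : ℝ × (Fin n → ℝ)) := by
    rw [hfdef]
    refine Prod.ext ?_ ?_
    · simp [Prod.fst_sum]
    · simp only [Prod.snd_add, Prod.snd_sum, Prod.smul_snd]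
      funext j
      simp [Pi.single_apply]
  rw [← hz, hdecomp, map_add, map_sum]
  congr 1
  refine Finset.sum_congr rfl fun i _ => ?_
  rw [map_smul, smul_eq_mul, mul_comm]
end

section
/- Let n be a natural number and for each i = 1, …, n let uᵢ : ℝ → ℝ be a measurable function; define ūᵢ : (Fin n → ℝ) → ℝ by ūᵢ(v) = uᵢ(v i), the utility that depends only on the i-th coordinate of the vector v of measure values. Suppose Overall : (Fin n → ℝ) → ℝ is measurable and satisfies: for all probability measures μ and ν on Fin n → ℝ such that Overall and each ūᵢ are integrable with respect to both μ and ν, if ∫ ūᵢ dμ = ∫ ūᵢ dν for every i, then ∫ Overall dμ = ∫ Overall dν. Then there exist real numbers α, w₁, …, wₙ with Overall(v) = α + ∑ᵢ wᵢ · uᵢ(v i) for every v : Fin n → ℝ. -/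
open MeasureTheory

section Helpers

variable {n : ℕ}

private lemma dirac_int {f : (Fin n → ℝ) → ℝ} (hf : Measurable f) (a : Fin n → ℝ) :
    Integrable f (Measure.dirac a) :=
  (integrable_const (f a)).congr (ae_eq_dirac' hf).symm

private lemma mix_prob {p : ℝ} (hp0 : 0 ≤ p) (hp1 : p ≤ 1) (a b : Fin n → ℝ) :
    IsProbabilityMeasure
      ((ENNReal.ofReal p) • Measure.dirac a + (ENNReal.ofReal (1 - p)) • Measure.dirac b) := by
  constructor
  rw [Measure.add_apply, Measure.smul_apply, Measure.smul_apply]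
  simp only [measure_univ, smul_eq_mul, mul_one]
  rw [← ENNReal.ofReal_add hp0 (by linarith : (0:ℝ) ≤ 1 - p)]
  norm_num

private lemma mix_int {p : ℝ} {f : (Fin n → ℝ) → ℝ} (hf : Measurable f) (a b : Fin n → ℝ) :
    Integrable f
      ((ENNReal.ofReal p) • Measure.dirac a + (ENNReal.ofReal (1 - p)) • Measure.dirac b) :=
  ((dirac_int hf a).smul_measure ENNReal.ofReal_ne_top).add_measure
    ((dirac_int hf b).smul_measure ENNReal.ofReal_ne_top)

private lemma mix_integral {p : ℝ} (hp0 : 0 ≤ p) (hp1 : p ≤ 1)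
    {f : (Fin n → ℝ) → ℝ} (hf : Measurable f) (a b : Fin n → ℝ) :
    ∫ v, f v ∂((ENNReal.ofReal p) • Measure.dirac a
        + (ENNReal.ofReal (1 - p)) • Measure.dirac b)
      = p * f a + (1 - p) * f b := by
  rw [integral_add_measure ((dirac_int hf a).smul_measure ENNReal.ofReal_ne_top)
      ((dirac_int hf b).smul_measure ENNReal.ofReal_ne_top),
    integral_smul_measure, integral_smul_measure, integral_dirac, integral_dirac,
    ENNReal.toReal_ofReal hp0, ENNReal.toReal_ofReal (by linarith : (0:ℝ) ≤ 1 - p)]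
  simp [smul_eq_mul]

/-- Segment representation of a point between two reals. -/
private lemma seg {A B m : ℝ} (h1 : A ≤ m) (h2 : m ≤ B) :
    ∃ p : ℝ, 0 ≤ p ∧ p ≤ 1 ∧ m = p * A + (1 - p) * B := by
  rcases eq_or_lt_of_le (h1.trans h2) with h | h
  · exact ⟨1, by norm_num, by norm_num, by rw [← h] at h2; nlinarith⟩
  · refine ⟨(B - m) / (B - A), div_nonneg (by linarith) (by linarith), ?_, ?_⟩
    · rw [div_le_one (by linarith)]; linarith
    · have hBA : B - A ≠ 0 := sub_ne_zero.mpr (ne_of_gt h)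
      field_simp
      ring

private lemma seg' {A B m : ℝ} (h : (A ≤ m ∧ m ≤ B) ∨ (B ≤ m ∧ m ≤ A)) :
    ∃ p : ℝ, 0 ≤ p ∧ p ≤ 1 ∧ m = p * A + (1 - p) * B := by
  rcases h with ⟨h1, h2⟩ | ⟨h1, h2⟩
  · exact seg h1 h2
  · obtain ⟨p, hp0, hp1, hp⟩ := seg h1 h2
    exact ⟨1 - p, by linarith, by linarith, by linarith⟩

/-- One-dimensional affineness from the mixture property. -/
private lemma oneD (U G : ℝ → ℝ) (b0 : ℝ) (hGb : G b0 = 0)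
    (hA : ∀ s t r p : ℝ, 0 ≤ p → p ≤ 1 → U s = p * U t + (1 - p) * U r →
      G s = p * G t + (1 - p) * G r) :
    ∃ w : ℝ, ∀ t, G t = w * (U t - U b0) := by
  by_cases hconst : ∀ t, U t = U b0
  · refine ⟨0, fun t => ?_⟩
    have := hA t b0 b0 1 (by norm_num) (le_refl 1) (by rw [hconst t]; ring)
    rw [hGb] at this
    rw [this, hconst t]; ring
  · push_neg at hconst
    obtain ⟨d, hd⟩ := hconst
    have hne : U d - U b0 ≠ 0 := sub_ne_zero.mpr hd
    refine ⟨G d / (U d - U b0), fun t => ?_⟩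
    rw [div_mul_eq_mul_div, eq_div_iff hne]
    -- goal : G t * (U d - U b0) = G d * (U t - U b0)
    have caseX : ∀ p : ℝ, 0 ≤ p → p ≤ 1 → U t = p * U d + (1 - p) * U b0 →
        G t * (U d - U b0) = G d * (U t - U b0) := by
      intro p hp0 hp1 hrel
      have h1 := hA t d b0 p hp0 hp1 hrel
      linear_combination (U d - U b0) * h1 + (1 - p) * (U d - U b0) * hGb - G d * hrel
    have caseD : ∀ p : ℝ, 0 ≤ p → p ≤ 1 → U d = p * U t + (1 - p) * U b0 →
        G t * (U d - U b0) = G d * (U t - U b0) := by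
      intro p hp0 hp1 hrel
      have h1 := hA d t b0 p hp0 hp1 hrel
      linear_combination G t * hrel - (U t - U b0) * h1 - (1 - p) * (U t - U b0) * hGb
    have caseC : ∀ p : ℝ, 0 ≤ p → p ≤ 1 → U b0 = p * U t + (1 - p) * U d →
        G t * (U d - U b0) = G d * (U t - U b0) := by
      intro p hp0 hp1 hrel
      have h1 := hA b0 t d p hp0 hp1 hrel
      linear_combination (G d - G t) * hrel + (U t - U d) * h1 + (U d - U t) * hGb
    rcases le_total (U t) (U b0) with h1 | h1 <;>
      rcases le_total (U t) (U d) with h2 | h2 <;>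
      rcases le_total (U b0) (U d) with h3 | h3
    · obtain ⟨p, hp0, hp1, hp⟩ := seg' (m := U b0) (A := U t) (B := U d) (Or.inl ⟨h1, h3⟩)
      exact caseC p hp0 hp1 hp
    · obtain ⟨p, hp0, hp1, hp⟩ := seg' (m := U d) (A := U t) (B := U b0) (Or.inl ⟨h2, h3⟩)
      exact caseD p hp0 hp1 hp
    · exact absurd (by linarith : U d = U b0) hd
    · obtain ⟨p, hp0, hp1, hp⟩ := seg' (m := U t) (A := U d) (B := U b0) (Or.inl ⟨h2, h1⟩)
      exact caseX p hp0 hp1 hp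
    · obtain ⟨p, hp0, hp1, hp⟩ := seg' (m := U t) (A := U d) (B := U b0) (Or.inr ⟨h1, h2⟩)
      exact caseX p hp0 hp1 hp
    · exact absurd (by linarith : U d = U b0) hd
    · obtain ⟨p, hp0, hp1, hp⟩ := seg' (m := U d) (A := U t) (B := U b0) (Or.inr ⟨h3, h2⟩)
      exact caseD p hp0 hp1 hp
    · obtain ⟨p, hp0, hp1, hp⟩ := seg' (m := U b0) (A := U t) (B := U d) (Or.inr ⟨h3, h1⟩)
      exact caseC p hp0 hp1 hp

end Helpers

/-- Proposition 1 in its original setting: the aggregate evaluation `Overall`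
of vectors of measure values, satisfying desideratum D with respect to the
myopic utilities `ūᵢ(v) = uᵢ(v i)`, is an affine combination of the coordinate
utilities. -/
theorem harsanyi_aggregation_measures
    (n : ℕ) (u : Fin n → ℝ → ℝ) (hu : ∀ i, Measurable (u i))
    (Overall : (Fin n → ℝ) → ℝ) (hOverall : Measurable Overall)
    (hD : ∀ (μ ν : Measure (Fin n → ℝ)),
      IsProbabilityMeasure μ → IsProbabilityMeasure ν →
      Integrable Overall μ → Integrable Overall ν →
      (∀ i, Integrable (fun v : Fin n → ℝ => u i (v i)) μ) →
      (∀ i, Integrable (fun v : Fin n → ℝ => u i (v i)) ν) →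
      (∀ i, ∫ v, u i (v i) ∂μ = ∫ v, u i (v i) ∂ν) →
      ∫ v, Overall v ∂μ = ∫ v, Overall v ∂ν) :
    ∃ (α : ℝ) (w : Fin n → ℝ), ∀ v : Fin n → ℝ,
      Overall v = α + ∑ i, w i * u i (v i) := by
  classical
  -- the two-point mixture consequence of desideratum D
  have key : ∀ (p q : ℝ), 0 ≤ p → p ≤ 1 → 0 ≤ q → q ≤ 1 →
      ∀ (a b c d : Fin n → ℝ),
      (∀ i, p * u i (a i) + (1 - p) * u i (b i) = q * u i (c i) + (1 - q) * u i (d i)) →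
      p * Overall a + (1 - p) * Overall b = q * Overall c + (1 - q) * Overall d := by
    intro p q hp0 hp1 hq0 hq1 a b c d h
    set μ : Measure (Fin n → ℝ) :=
      (ENNReal.ofReal p) • Measure.dirac a + (ENNReal.ofReal (1 - p)) • Measure.dirac b with hμ
    set ν : Measure (Fin n → ℝ) :=
      (ENNReal.ofReal q) • Measure.dirac c + (ENNReal.ofReal (1 - q)) • Measure.dirac d with hν
    have hui : ∀ i, Measurable (fun v : Fin n → ℝ => u i (v i)) :=
      fun i => (hu i).comp (measurable_pi_apply i)
    have := hD μ ν (mix_prob hp0 hp1 a b) (mix_prob hq0 hq1 c d)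
      (mix_int hOverall a b) (mix_int hOverall c d)
      (fun i => mix_int (hui i) a b) (fun i => mix_int (hui i) c d)
      (fun i => by
        rw [hμ, hν, mix_integral hp0 hp1 (hui i), mix_integral hq0 hq1 (hui i)]
        exact h i)
    rwa [hμ, hν, mix_integral hp0 hp1 hOverall, mix_integral hq0 hq1 hOverall] at this
  -- base point
  set b : Fin n → ℝ := fun _ => 0 with hb
  -- the single-coordinate mixture property
  have hA : ∀ (i : Fin n) (s t r p : ℝ), 0 ≤ p → p ≤ 1 →
      u i s = p * u i t + (1 - p) * u i r →
      Overall (Function.update b i s) - Overall b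
        = p * (Overall (Function.update b i t) - Overall b)
          + (1 - p) * (Overall (Function.update b i r) - Overall b) := by
    intro i s t r p hp0 hp1 hrel
    have := key 1 p (by norm_num) (le_refl 1) hp0 hp1
      (Function.update b i s) b (Function.update b i t) (Function.update b i r)
      (fun j => by
        by_cases hj : j = i
        · subst hj
          simp only [Function.update_self]
          linarith
        · simp only [Function.update_of_ne hj]
          ring)
    linarith
  -- coordinate weights
  have hw : ∀ i : Fin n, ∃ w : ℝ, ∀ t : ℝ,
      Overall (Function.update b i t) - Overall b = w * (u i t - u i (b i)) := by
    intro i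
    refine oneD (u i) (fun t => Overall (Function.update b i t) - Overall b) (b i) ?_ ?_
    · show Overall (Function.update b i (b i)) - Overall b = 0
      rw [Function.update_eq_self]; ring
    · exact hA i
  choose w hwspec using hw
  -- telescoping over coordinates
  have tel : ∀ (v : Fin n → ℝ) (k : ℕ), k ≤ n →
      Overall (fun j => if (j : ℕ) < k then v j else b j)
        = Overall b + ∑ j : Fin n, (if (j : ℕ) < k then
            (Overall (Function.update b j (v j)) - Overall b) else 0) := by
    intro v k
    induction k with
    | zero =>
      intro _
      simp only [Nat.not_lt_zero, if_false]
      simp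
    | succ k ih =>
      intro hk
      have hkn : k < n := hk
      have hkk : k ≤ n := le_of_lt hkn
      set i : Fin n := ⟨k, hkn⟩ with hi
      have step := key (1/2 : ℝ) (1/2 : ℝ) (by norm_num) (by norm_num) (by norm_num) (by norm_num)
        (fun j => if (j : ℕ) < k + 1 then v j else b j) b
        (fun j => if (j : ℕ) < k then v j else b j) (Function.update b i (v i))
        (fun j => by
          by_cases hj : j = i
          · have h1 : (i : ℕ) < k + 1 := Nat.lt_succ_self k
            have h2 : ¬ (i : ℕ) < k := lt_irrefl k
            rw [hj]
            simp only [Function.update_self, h1, h2, if_true, if_false]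
            ring
          · have hjk : (j : ℕ) ≠ k := fun h => hj (Fin.ext h)
            by_cases hlt : (j : ℕ) < k
            · have : (j : ℕ) < k + 1 := Nat.lt_succ_of_lt hlt
              simp only [if_pos hlt, if_pos this, Function.update_of_ne hj]
            · have : ¬ (j : ℕ) < k + 1 := by omega
              simp only [if_neg hlt, if_neg this, Function.update_of_ne hj])
      have hsum : ∑ j : Fin n, (if (j : ℕ) < k + 1 then
            (Overall (Function.update b j (v j)) - Overall b) else 0)
          = (∑ j : Fin n, (if (j : ℕ) < k then
            (Overall (Function.update b j (v j)) - Overall b) else 0))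
            + (Overall (Function.update b i (v i)) - Overall b) := by
        have : ∀ j : Fin n, (if (j : ℕ) < k + 1 then
              (Overall (Function.update b j (v j)) - Overall b) else 0)
            = (if (j : ℕ) < k then
              (Overall (Function.update b j (v j)) - Overall b) else 0)
              + (if j = i then (Overall (Function.update b i (v i)) - Overall b) else 0) := by
          intro j
          by_cases hj : j = i
          · have h1 : (i : ℕ) < k + 1 := Nat.lt_succ_self k
            have h2 : ¬ (i : ℕ) < k := lt_irrefl k
            simp [hj, h1, h2]
          · have hjk : (j : ℕ) ≠ k := fun h => hj (Fin.ext h)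
            by_cases hlt : (j : ℕ) < k
            · have : (j : ℕ) < k + 1 := Nat.lt_succ_of_lt hlt
              simp [hlt, this, hj]
            · have : ¬ (j : ℕ) < k + 1 := by omega
              simp [hlt, this, hj]
        rw [Finset.sum_congr rfl (fun j _ => this j), Finset.sum_add_distrib,
          Finset.sum_ite_eq' Finset.univ i]
        simp
      rw [hsum]
      linarith [step, ih hkk]
  -- conclusion
  refine ⟨Overall b - ∑ i, w i * u i (b i), w, fun v => ?_⟩
  have hv : (fun j : Fin n => if (j : ℕ) < n then v j else b j) = v := by
    funext j
    simp [j.isLt]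
  have := tel v n (le_refl n)
  rw [hv] at this
  have hsum : ∑ j : Fin n, (if (j : ℕ) < n then
        (Overall (Function.update b j (v j)) - Overall b) else 0)
      = ∑ j : Fin n, w j * (u j (v j) - u j (b j)) := by
    apply Finset.sum_congr rfl
    intro j _
    rw [if_pos j.isLt, hwspec j (v j)]
  rw [hsum] at this
  rw [this]
  rw [Finset.sum_congr rfl (fun j _ => mul_sub (w j) (u j (v j)) (u j (b j))),
    Finset.sum_sub_distrib]
  ring
end

section
/- Let Ω be any type, let n be a natural number, let u₁, …, uₙ : Ω → ℝ be functions, and let V be the linear span (inside the vector space of all functions Ω → ℝ) of the constant function 1 together with u₁, …, uₙ. If z : Ω → ℝ does not lie in V, then there exist a natural number m, points x₁, …, xₘ ∈ Ω, and real numbers c₁, …, cₘ such that ∑ⱼ cⱼ · f(xⱼ) = 0 for every f ∈ V and ∑ⱼ cⱼ · z(xⱼ) = 1. -/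
/-- Separation step in Border's proof of Harsanyi's theorem: if `z` is not in
the span of the constant function 1 together with `u 0, …, u (n-1)`, then some
finite linear combination of point evaluations annihilates the span but
assigns `z` the value 1. -/
theorem border_separation
    {Ω : Type*} (n : ℕ) (u : Fin n → Ω → ℝ) (z : Ω → ℝ)
    (V : Submodule ℝ (Ω → ℝ))
    (hV : V = Submodule.span ℝ (insert (fun _ => (1 : ℝ)) (Set.range u)))
    (hz : z ∉ V) :
    ∃ (m : ℕ) (x : Fin m → Ω) (c : Fin m → ℝ),
      (∀ f ∈ V, ∑ j, c j * f (x j) = 0) ∧ ∑ j, c j * z (x j) = 1 := by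
  classical
  -- the ambient finite-dimensional space
  set S : Set (Ω → ℝ) := insert z (insert (fun _ => (1 : ℝ)) (Set.range u)) with hS
  set W : Submodule ℝ (Ω → ℝ) := Submodule.span ℝ S with hW
  have hSfin : S.Finite := by
    apply Set.Finite.insert
    apply Set.Finite.insert
    exact Set.finite_range u
  have hWfd : FiniteDimensional ℝ W := FiniteDimensional.span_of_finite ℝ hSfin
  have hVW : V ≤ W := by
    rw [hV, hW]
    exact Submodule.span_mono (Set.subset_insert _ _)
  have hzW : z ∈ W := Submodule.subset_span (Set.mem_insert _ _)
  -- V as a submodule of W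
  set V' : Submodule ℝ W := V.comap W.subtype with hV'
  have hzV' : (⟨z, hzW⟩ : W) ∉ V' := by
    simpa [hV'] using hz
  -- a functional on W vanishing on V with value 1 on z
  have hzq : (V'.mkQ ⟨z, hzW⟩ : W ⧸ V') ≠ 0 := by
    simp only [Submodule.mkQ_apply, ne_eq, Submodule.Quotient.mk_eq_zero]
    exact hzV'
  obtain ⟨φ, hφ⟩ : ∃ φ : Module.Dual ℝ (W ⧸ V'), φ (V'.mkQ ⟨z, hzW⟩) ≠ 0 := by
    by_contra h
    push_neg at h
    exact hzq ((Module.forall_dual_apply_eq_zero_iff ℝ _).mp h)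
  set ψ : W →ₗ[ℝ] ℝ := ((φ (V'.mkQ ⟨z, hzW⟩))⁻¹ • φ).comp V'.mkQ with hψ
  have hψz : ψ ⟨z, hzW⟩ = 1 := by
    have hφ' : φ (Submodule.Quotient.mk ⟨z, hzW⟩) ≠ 0 := by simpa using hφ
    simp [hψ, inv_mul_cancel₀ hφ']
  have hψV : ∀ f (hf : f ∈ V), ψ ⟨f, hVW hf⟩ = 0 := by
    intro f hf
    have : V'.mkQ ⟨f, hVW hf⟩ = 0 := by
      rw [Submodule.mkQ_apply, Submodule.Quotient.mk_eq_zero]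
      simpa [hV'] using hf
    simp [hψ, this]
  -- point evaluations on W
  set L : Ω → (W →ₗ[ℝ] ℝ) := fun x =>
    { toFun := fun f => (f : Ω → ℝ) x
      map_add' := fun f g => rfl
      map_smul' := fun c f => rfl } with hL
  have hker : ⨅ x, LinearMap.ker (L x) ≤ LinearMap.ker ψ := by
    intro f hf
    have hf0 : f = 0 := by
      ext x
      have := (Submodule.mem_iInf _).mp hf x
      simpa [hL, LinearMap.mem_ker] using this
    simp [hf0]
  have hmem : ψ ∈ Submodule.span ℝ (Set.range L) :=
    FiniteDimensional.mem_span_of_iInf_ker_le_ker hker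
  obtain ⟨m, c, g, hsum⟩ := Submodule.mem_span_set'.mp hmem
  choose x hx using fun j => (g j).2
  refine ⟨m, x, c, ?_, ?_⟩
  · intro f hf
    have := congrArg (fun T : W →ₗ[ℝ] ℝ => T ⟨f, hVW hf⟩) hsum
    simp only [LinearMap.coe_sum, Finset.sum_apply, LinearMap.smul_apply,
      smul_eq_mul] at this
    rw [hψV f hf] at this
    rw [← this]
    refine Finset.sum_congr rfl fun j _ => ?_
    rw [← hx j]
    rfl
  · have := congrArg (fun T : W →ₗ[ℝ] ℝ => T ⟨z, hzW⟩) hsum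
    simp only [LinearMap.coe_sum, Finset.sum_apply, LinearMap.smul_apply,
      smul_eq_mul] at this
    rw [hψz] at this
    rw [← this]
    refine Finset.sum_congr rfl fun j _ => ?_
    rw [← hx j]
    rfl
end
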